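/- The Cline-type density f(x) = a e^{−χ(x)} (x ≥ 0) is long-tailed: for each constant t ∈ ℝ, f(x+t)/f(x) → 1 as x → ∞ (equivalently, χ(x+t) − χ(x) → 0 for each t); that is, f ∈ 𝓛₀. -/

import Mathlib

open MeasureTheory Filter Set

noncomputable section

/-- `χ(x) = x^{1/2 + δ·cos(ln(x+1))}` (real power). -/
def chiFn (δ : ℝ) (x : ℝ) : ℝ := x ^ ((1:ℝ)/2 + δ * Real.cos (Real.log (x + 1)))

/-- The normalizing constant `a = (∫₀^∞ e^{-χ(y)} dy)⁻¹`. -/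
def clineA (δ : ℝ) : ℝ := (∫ y in Set.Ioi (0:ℝ), Real.exp (-chiFn δ y))⁻¹

/-- The Cline-type density `f(x) = a e^{-χ(x)}` for `x ≥ 0`, `0` for `x < 0`. -/
def clineF (δ : ℝ) (x : ℝ) : ℝ :=
  if x < 0 then 0 else clineA δ * Real.exp (-chiFn δ x)

/-- The long-tailed density class `𝓛₀`. -/
def LongTailedDensity (f : ℝ → ℝ) : Prop :=
  (∀ᶠ x in atTop, 0 < f x) ∧
  ∀ t : ℝ, Tendsto (fun x => f (x + t) / f x) atTop (nhds 1)

/-!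
Write `χ(x) = x^{p(x)}` with `p(x) = 1/2 + δ cos(ln(x+1)) ∈ [1/2 - δ, 1/2 + δ]`. The oscillating
exponent only costs a factor `ln x` in the derivative:
`|χ'(x)| ≤ x^{p(x) - 1} (1 + ln x) ≤ (1 + ln x) / x^{1/2 - δ} → 0`,
so by the mean value theorem `χ(x + t) - χ(x) → 0`, and `f(x + t) / f(x) = e^{χ(x) - χ(x + t)} → 1`.
The normalising constant is positive and finite because `e^{-χ(y)} ≤ e · e^{-y^{1/2 - δ}}`.
-/

open Real Topology

theorem tendsto_add_sub_self_of_hasDerivAt {f f' : ℝ → ℝ}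
    (hf : ∀ᶠ x in atTop, HasDerivAt f (f' x) x) (hf' : Tendsto f' atTop (𝓝 0)) (t : ℝ) :
    Tendsto (fun x => f (x + t) - f x) atTop (𝓝 0) := by
  rw [Metric.tendsto_nhds]
  intro ε hε
  have hη : 0 < ε / (|t| + 1) := by positivity
  obtain ⟨N, hN⟩ := eventually_atTop.1
    (hf.and (hf'.eventually (Metric.closedBall_mem_nhds 0 hη)))
  filter_upwards [eventually_ge_atTop (N + |t|)] with x hx
  have hmvt := (convex_Ici N).norm_image_sub_le_of_norm_hasDerivWithin_le
    (fun y hy => (hN y hy).1.hasDerivWithinAt)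
    (fun y hy => mem_closedBall_zero_iff.1 (hN y hy).2)
    (show N ≤ x by linarith [abs_nonneg t]) (show N ≤ x + t by linarith [neg_abs_le t])
  rw [add_sub_cancel_left, norm_eq_abs] at hmvt
  calc dist (f (x + t) - f x) 0 ≤ ε / (|t| + 1) * |t| := by rwa [dist_zero_right]
    _ < ε := by
      rw [div_mul_eq_mul_div, div_lt_iff₀ (by positivity)]
      nlinarith [abs_nonneg t]

theorem tendsto_one_add_log_div_rpow_atTop {s : ℝ} (hs : 0 < s) :
    Tendsto (fun x => (1 + log x) / x ^ s) atTop (𝓝 0) :=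
  ((isLittleO_const_log_atTop.trans (isLittleO_log_rpow_atTop hs)).add
    (isLittleO_log_rpow_atTop hs)).tendsto_div_nhds_zero

theorem rpow_le_rpow_add_one {x p q : ℝ} (hx : 0 ≤ x) (hq : 0 ≤ q) (hqp : q ≤ p) :
    x ^ q ≤ x ^ p + 1 := by
  rcases le_total 1 x with h1 | h1
  · linarith [rpow_le_rpow_of_exponent_le h1 hqp]
  · linarith [rpow_le_one hx h1 hq, rpow_nonneg hx p]

theorem LongTailedDensity.of_eventuallyEq_mul_exp {f g : ℝ → ℝ} {c : ℝ} (hc : 0 < c)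
    (hf : ∀ᶠ x in atTop, f x = c * exp (-g x))
    (hg : ∀ t, Tendsto (fun x => g (x + t) - g x) atTop (𝓝 0)) :
    LongTailedDensity f := by
  refine ⟨hf.mono fun x hx => hx ▸ by positivity, fun t => ?_⟩
  have hratio : ∀ᶠ x in atTop, exp (-(g (x + t) - g x)) = f (x + t) / f x := by
    filter_upwards [hf, (tendsto_atTop_add_const_right atTop t tendsto_id).eventually hf]
      with x hx (hxt : f (x + t) = c * exp (-g (x + t)))
    rw [hxt, hx, mul_div_mul_left _ _ hc.ne', ← exp_sub]
    ring_nf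
  exact (tendsto_exp_nhds_zero_nhds_one.comp (by simpa using (hg t).neg)).congr' hratio

section Cline

variable {δ : ℝ}

def chiExponent (δ x : ℝ) : ℝ := 1 / 2 + δ * cos (log (x + 1))

theorem chiFn_eq (δ x : ℝ) : chiFn δ x = x ^ chiExponent δ x := rfl

theorem chiExponent_mem_Icc (hδ0 : 0 ≤ δ) (x : ℝ) :
    chiExponent δ x ∈ Icc (1 / 2 - δ) (1 / 2 + δ) := by
  have := neg_one_le_cos (log (x + 1))
  have := cos_le_one (log (x + 1))
  constructor <;> unfold chiExponent <;> nlinarith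

/-- `χ'(x)`, written as `x^{p(x) - 1} (p(x) + x p'(x) ln x)`. -/
def chiDeriv (δ x : ℝ) : ℝ :=
  x ^ (chiExponent δ x - 1) * (chiExponent δ x - δ * sin (log (x + 1)) * (x / (x + 1)) * log x)

theorem hasDerivAt_chiFn {x : ℝ} (hx : 0 < x) : HasDerivAt (chiFn δ) (chiDeriv δ x) x := by
  have hlog : HasDerivAt (fun y => log (y + 1)) (1 / (x + 1)) x :=
    ((hasDerivAt_id' x).add_const 1).log (by positivity)
  have hexp : HasDerivAt (chiExponent δ) (δ * (-sin (log (x + 1)) * (1 / (x + 1)))) x :=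
    (hlog.cos.const_mul δ).const_add (1 / 2)
  convert (hasDerivAt_id' x).rpow hexp hx using 1
  · rfl
  · rw [chiDeriv, rpow_sub_one hx.ne']
    field_simp
    ring

theorem abs_chiDeriv_le (hδ0 : 0 ≤ δ) (hδ : δ ≤ 1 / 2) {x : ℝ} (hx : 1 ≤ x) :
    |chiDeriv δ x| ≤ (1 + log x) / x ^ (1 / 2 - δ) := by
  obtain ⟨hp₁, hp₂⟩ := chiExponent_mem_Icc hδ0 x
  have hlog : 0 ≤ log x := log_nonneg hx
  have hpow : x ^ (chiExponent δ x - 1) ≤ (x ^ (1 / 2 - δ))⁻¹ := by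
    rw [← rpow_neg (by linarith)]
    exact rpow_le_rpow_of_exponent_le hx (by linarith)
  have hfactor :
      |chiExponent δ x - δ * sin (log (x + 1)) * (x / (x + 1)) * log x| ≤ 1 + log x := by
    have hsin := abs_sin_le_one (log (x + 1))
    have hfrac : |x / (x + 1)| ≤ 1 := by
      rw [abs_of_pos (by positivity), div_le_one (by linarith)]
      linarith
    calc _ ≤ |chiExponent δ x| + |δ| * |sin (log (x + 1))| * |x / (x + 1)| * |log x| :=
          (abs_sub _ _).trans_eq (by simp only [abs_mul])
      _ ≤ 1 * 1 + 1 * 1 * 1 * log x := by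
          rw [abs_of_nonneg hlog]
          gcongr
          · exact abs_le.2 ⟨by linarith, by linarith⟩
          · exact abs_le.2 ⟨by linarith, by linarith⟩
      _ = 1 + log x := by ring
  rw [chiDeriv, abs_mul, abs_of_pos (rpow_pos_of_pos (by linarith) _), div_eq_inv_mul (1 + log x)]
  gcongr

theorem tendsto_chiDeriv_atTop (hδ0 : 0 ≤ δ) (hδ : δ < 1 / 2) :
    Tendsto (chiDeriv δ) atTop (𝓝 0) :=
  squeeze_zero_norm' ((eventually_ge_atTop 1).mono fun _ hx => abs_chiDeriv_le hδ0 hδ.le hx)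
    (tendsto_one_add_log_div_rpow_atTop (by linarith))

theorem tendsto_chiFn_add_sub (hδ0 : 0 ≤ δ) (hδ : δ < 1 / 2) (t : ℝ) :
    Tendsto (fun x => chiFn δ (x + t) - chiFn δ x) atTop (𝓝 0) :=
  tendsto_add_sub_self_of_hasDerivAt
    ((eventually_gt_atTop 0).mono fun _ hx => hasDerivAt_chiFn hx)
    (tendsto_chiDeriv_atTop hδ0 hδ) t

theorem exp_neg_chiFn_le (hδ0 : 0 ≤ δ) (hδ : δ < 1 / 2) {y : ℝ} (hy : 0 ≤ y) :
    exp (-chiFn δ y) ≤ exp 1 * exp (-y ^ (1 / 2 - δ)) := by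
  rw [← exp_add, exp_le_exp, chiFn_eq]
  linarith [rpow_le_rpow_add_one hy (by linarith : (0:ℝ) ≤ 1 / 2 - δ)
    (chiExponent_mem_Icc hδ0 y).1]

theorem integrableOn_exp_neg_chiFn (hδ0 : 0 ≤ δ) (hδ : δ < 1 / 2) :
    IntegrableOn (fun y => exp (-chiFn δ y)) (Ioi 0) := by
  have hdom : IntegrableOn (fun y => exp 1 * exp (-y ^ (1 / 2 - δ))) (Ioi 0) := by
    have := integrableOn_rpow_mul_exp_neg_rpow (s := 0) (by norm_num)
      (by linarith : (0:ℝ) < 1 / 2 - δ)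
    simp only [rpow_zero, one_mul] at this
    exact this.const_mul (exp 1)
  refine hdom.mono' (Measurable.aestronglyMeasurable (by unfold chiFn; measurability)) ?_
  filter_upwards [ae_restrict_mem measurableSet_Ioi] with y hy
  rw [norm_of_nonneg (exp_pos _).le]
  exact exp_neg_chiFn_le hδ0 hδ (le_of_lt hy)

theorem clineA_pos (hδ0 : 0 ≤ δ) (hδ : δ < 1 / 2) : 0 < clineA δ := by
  have : NeZero (volume.restrict (Ioi (0:ℝ))) := ⟨by simp⟩
  exact inv_pos.2 (integral_exp_pos (integrableOn_exp_neg_chiFn hδ0 hδ))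

theorem clineF_eventuallyEq : ∀ᶠ x in atTop, clineF δ x = clineA δ * exp (-chiFn δ x) := by
  filter_upwards [eventually_ge_atTop 0] with x hx
  simp [clineF, hx.not_gt]

end Cline

theorem cline_density_long_tailed (δ : ℝ) (hδ0 : 0 < δ) (hδ : δ < 1/2) :
    (∀ t : ℝ, Tendsto (fun x => chiFn δ (x + t) - chiFn δ x) atTop (nhds 0)) ∧
    LongTailedDensity (clineF δ) := by
  have hχ := tendsto_chiFn_add_sub hδ0.le hδ
  exact ⟨hχ, .of_eventuallyEq_mul_exp (clineA_pos hδ0.le hδ) clineF_eventuallyEq hχ⟩
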